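/- Let (X,d) be a complete metric space and f_1,…,f_N : X → X nonexpansive maps such that there exists a nonempty closed bounded set C with Φ(C) ⊆ C. Let (x_n)_{n≥0} and (y_n)_{n≥0} be two orbits starting at the same point y_0 = x_0, with disjunctive driving sequences (i_n)_{n≥1} and (j_n)_{n≥1}. Assume condition (CO): there exists a finite word (u_1,…,u_l) ∈ {1,…,N}^l such that the composition f_{u_l} ∘ … ∘ f_{u_1} restricted to the branching tree T = ⋃_{n=0}^∞ Φ^n({x_0}) = {f_{σ_k} ∘ … ∘ f_{σ_1}(x_0) : k ≥ 0, σ_1,…,σ_k ∈ {1,…,N}} is a Lipschitz contraction (Lipschitz with some constant L < 1 on T). Then the omega-limit sets coincide: ω((x_n)) = ω((y_n)). -/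

import Mathlib

/-!
Let `g` be the composition along the word of condition (CO). The branching tree `T` of `x₀` is
bounded (it stays within bounded distance of the subinvariant set `C`) and `g` maps it into
itself with Lipschitz constant `L < 1`, so `g^k` squeezes all of `T` into a set of diameter
`≤ Lᵏ · diam T`. Both orbits live in `T`. Given a point `x_n` of the first orbit close to
`p ∈ ω(x)`, taken after an occurrence of the word `u^k`, write `x_n = W(g^k(x_r))`. The
disjunctive sequence `τ` contains the word `u^k W` arbitrarily late, and the corresponding point
`W(g^k(y_{r'}))` of the second orbit is then within `Lᵏ · diam T` of `x_n`, since `W` is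
nonexpansive. Hence `ω(x) ⊆ ω(y)`, and the converse holds by symmetry.
-/

/-- The omega-limit set of a sequence: the descending intersection of the
closures of the tails of the sequence. -/
def omegaLimitSet {X : Type*} [MetricSpace X] (x : ℕ → X) : Set X :=
  ⋂ m : ℕ, closure (x '' Set.Ici m)

/-- Apply the maps of the IFS along a word, the head of the list acting first:
`wordMap f [u₁, …, u_l] = f_{u_l} ∘ … ∘ f_{u_1}`. -/
def wordMap {X : Type*} {N : ℕ} (f : Fin N → X → X) : List (Fin N) → X → X
  | [], p => p
  | i :: w, p => wordMap f w (f i p)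

/-- A sequence of symbols is disjunctive if it contains every finite word over
the alphabet as a consecutive subword. -/
def Disjunctive {N : ℕ} (σ : ℕ → Fin N) : Prop :=
  ∀ (m : ℕ) (w : Fin m → Fin N), ∃ n₀ : ℕ, ∀ j : Fin m, σ (n₀ + (j : ℕ)) = w j

open Set Metric Filter

section WordMap

variable {X : Type*} {N : ℕ}

lemma wordMap_append (f : Fin N → X → X) (v w : List (Fin N)) (p : X) :
    wordMap f (v ++ w) p = wordMap f w (wordMap f v p) := by
  induction v generalizing p with
  | nil => rfl
  | cons i v ih => exact ih (f i p)

lemma wordMap_flatten_replicate (f : Fin N → X → X) (u : List (Fin N)) (k : ℕ) :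
    wordMap f (List.replicate k u).flatten = (wordMap f u)^[k] := by
  funext p
  induction k generalizing p with
  | zero => rfl
  | succ k ih =>
    rw [List.replicate_succ, List.flatten_cons, wordMap_append, ih, Function.iterate_succ_apply]

lemma wordMap_mem_range_wordMap (f : Fin N → X → X) (v : List (Fin N)) {p q : X}
    (hq : q ∈ range fun w => wordMap f w p) : wordMap f v q ∈ range fun w => wordMap f w p := by
  obtain ⟨w, rfl⟩ := hq
  exact ⟨w ++ v, wordMap_append f w v p⟩

lemma mapsTo_wordMap {f : Fin N → X → X} {C : Set X} (hC : ∀ i, MapsTo (f i) C C)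
    (w : List (Fin N)) : MapsTo (wordMap f w) C C := by
  induction w with
  | nil => exact mapsTo_id C
  | cons i w ih => exact ih.comp (hC i)

variable [PseudoMetricSpace X] {f : Fin N → X → X}

lemma dist_wordMap_le (hf : ∀ i a b, dist (f i a) (f i b) ≤ dist a b) (w : List (Fin N))
    (a b : X) : dist (wordMap f w a) (wordMap f w b) ≤ dist a b := by
  induction w generalizing a b with
  | nil => exact le_rfl
  | cons i w ih => exact (ih _ _).trans (hf i a b)

lemma isBounded_range_wordMap (hf : ∀ i a b, dist (f i a) (f i b) ≤ dist a b) {C : Set X}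
    (hC : ∀ i, MapsTo (f i) C C) (hCne : C.Nonempty) (hCbdd : Bornology.IsBounded C) (p : X) :
    Bornology.IsBounded (range fun w => wordMap f w p) := by
  obtain ⟨c, hc⟩ := hCne
  refine (isBounded_iff_subset_closedBall c).2 ⟨dist p c + diam C, ?_⟩
  rintro _ ⟨w, rfl⟩
  calc dist (wordMap f w p) c
      ≤ dist (wordMap f w p) (wordMap f w c) + dist (wordMap f w c) c := dist_triangle _ _ _
    _ ≤ dist p c + diam C := add_le_add (dist_wordMap_le hf w p c)
        (dist_le_diam_of_mem hCbdd (mapsTo_wordMap hC w hc) hc)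

end WordMap

section Orbit

variable {X : Type*} {N : ℕ} {f : Fin N → X → X} {ρ : ℕ → Fin N} {z : ℕ → X}

lemma orbit_add_length_eq_wordMap (hz : ∀ n, z (n + 1) = f (ρ n) (z n)) {v : List (Fin N)}
    {r : ℕ} (hv : ∀ (i : ℕ) (hi : i < v.length), ρ (r + i) = v[i]) :
    z (r + v.length) = wordMap f v (z r) := by
  induction v generalizing r with
  | nil => rfl
  | cons a v ih =>
    have hv' : ∀ (i : ℕ) (hi : i < v.length), ρ (r + 1 + i) = v[i] := fun i hi => by
      rw [Nat.add_assoc, Nat.add_comm 1 i]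
      exact hv (i + 1) (by simpa using hi)
    have ha : ρ r = a := hv 0 (by simp)
    rw [List.length_cons, ← Nat.add_assoc, Nat.add_right_comm, ih hv', hz, ha]
    rfl

lemma exists_orbit_eq_wordMap_of_le (hz : ∀ n, z (n + 1) = f (ρ n) (z n)) {r n : ℕ}
    (hrn : r ≤ n) : ∃ w, z n = wordMap f w (z r) := by
  induction n, hrn using Nat.le_induction with
  | base => exact ⟨[], rfl⟩
  | succ n _ ih =>
    obtain ⟨w, hw⟩ := ih
    exact ⟨w ++ [ρ n], by rw [wordMap_append, ← hw, hz]; rfl⟩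

lemma orbit_mem_range_wordMap (hz : ∀ n, z (n + 1) = f (ρ n) (z n)) (n : ℕ) :
    z n ∈ range fun w => wordMap f w (z 0) := by
  obtain ⟨w, hw⟩ := exists_orbit_eq_wordMap_of_le hz (Nat.zero_le n)
  exact ⟨w, hw.symm⟩

lemma Disjunctive.exists_ge_getElem_eq (hρ : Disjunctive ρ) (m : ℕ) (v : List (Fin N)) :
    ∃ r ≥ m, ∀ (i : ℕ) (hi : i < v.length), ρ (r + i) = v[i] := by
  obtain ⟨n₀, hn₀⟩ := hρ (m + v.length) (Fin.append (fun _ : Fin m => ρ 0) v.get)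
  refine ⟨n₀ + m, Nat.le_add_left m n₀, fun i hi => ?_⟩
  have h := hn₀ (Fin.natAdd m ⟨i, hi⟩)
  rw [Fin.append_right, Fin.val_natAdd, ← Nat.add_assoc] at h
  exact h

lemma Disjunctive.exists_ge_orbit_eq_wordMap (hρ : Disjunctive ρ)
    (hz : ∀ n, z (n + 1) = f (ρ n) (z n)) (m : ℕ) (v : List (Fin N)) :
    ∃ r ≥ m, z (r + v.length) = wordMap f v (z r) := by
  obtain ⟨r, hrm, hr⟩ := hρ.exists_ge_getElem_eq m v
  exact ⟨r, hrm, orbit_add_length_eq_wordMap hz hr⟩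

end Orbit

section Synchronizing

variable {X : Type*} [PseudoMetricSpace X] {N : ℕ}

def IsSynchronizing (f : Fin N → X → X) (T : Set X) : Prop :=
  ∀ ε > 0, ∃ v : List (Fin N), ∀ s ∈ T, ∀ t ∈ T, dist (wordMap f v s) (wordMap f v t) < ε

lemma exists_iterate_dist_lt {T : Set X} (hT : Bornology.IsBounded T) {g : X → X}
    (hg : MapsTo g T T) {L : ℝ} (hL0 : 0 ≤ L) (hL1 : L < 1)
    (hcon : ∀ s ∈ T, ∀ t ∈ T, dist (g s) (g t) ≤ L * dist s t) {ε : ℝ} (hε : 0 < ε) :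
    ∃ k : ℕ, ∀ s ∈ T, ∀ t ∈ T, dist (g^[k] s) (g^[k] t) < ε := by
  have hiter : ∀ k, ∀ s ∈ T, ∀ t ∈ T, dist (g^[k] s) (g^[k] t) ≤ L ^ k * dist s t := by
    intro k
    induction k with
    | zero => simp
    | succ k ih =>
      intro s hs t ht
      rw [Function.iterate_succ_apply', Function.iterate_succ_apply', pow_succ', mul_assoc]
      exact (hcon _ (hg.iterate k hs) _ (hg.iterate k ht)).trans
        (mul_le_mul_of_nonneg_left (ih s hs t ht) hL0)
  have hlim : Tendsto (fun k => L ^ k * diam T) atTop (nhds 0) := by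
    simpa using (tendsto_pow_atTop_nhds_zero_of_lt_one hL0 hL1).mul_const (diam T)
  obtain ⟨k, hk⟩ := (hlim.eventually (gt_mem_nhds hε)).exists
  exact ⟨k, fun s hs t ht => ((hiter k s hs t ht).trans
    (mul_le_mul_of_nonneg_left (dist_le_diam_of_mem hT hs ht) (pow_nonneg hL0 k))).trans_lt hk⟩

lemma isSynchronizing_of_contracting_word {f : Fin N → X → X} {T : Set X}
    (hT : Bornology.IsBounded T) {u : List (Fin N)} (hu : MapsTo (wordMap f u) T T) {L : ℝ}
    (hL0 : 0 ≤ L) (hL1 : L < 1)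
    (hcon : ∀ s ∈ T, ∀ t ∈ T, dist (wordMap f u s) (wordMap f u t) ≤ L * dist s t) :
    IsSynchronizing f T := by
  intro ε hε
  obtain ⟨k, hk⟩ := exists_iterate_dist_lt hT hu hL0 hL1 hcon hε
  exact ⟨(List.replicate k u).flatten, by simpa only [wordMap_flatten_replicate] using hk⟩

end Synchronizing

section OmegaLimit

variable {X : Type*} [MetricSpace X] {N : ℕ}

lemma mem_omegaLimitSet_iff {z : ℕ → X} {p : X} :
    p ∈ omegaLimitSet z ↔ ∀ m, ∀ ε > 0, ∃ n ≥ m, dist p (z n) < ε := by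
  simp only [omegaLimitSet, mem_iInter, Metric.mem_closure_iff, mem_image, mem_Ici]
  refine forall_congr' fun m => forall₂_congr fun ε _ => ⟨?_, ?_⟩
  · rintro ⟨_, ⟨n, hn, rfl⟩, h⟩
    exact ⟨n, hn, h⟩
  · rintro ⟨n, hn, h⟩
    exact ⟨z n, ⟨n, hn, rfl⟩, h⟩

lemma omegaLimitSet_subset_of_isSynchronizing {f : Fin N → X → X}
    (hf : ∀ i a b, dist (f i a) (f i b) ≤ dist a b) {T : Set X} (hsync : IsSynchronizing f T)
    {x y : ℕ → X} {σ τ : ℕ → Fin N} (hx : ∀ n, x (n + 1) = f (σ n) (x n))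
    (hy : ∀ n, y (n + 1) = f (τ n) (y n)) (hxT : ∀ n, x n ∈ T) (hyT : ∀ n, y n ∈ T)
    (hσ : Disjunctive σ) (hτ : Disjunctive τ) : omegaLimitSet x ⊆ omegaLimitSet y := by
  intro p hp
  rw [mem_omegaLimitSet_iff] at hp ⊢
  intro m ε hε
  obtain ⟨v, hv⟩ := hsync (ε / 2) (half_pos hε)
  obtain ⟨r, -, hxr⟩ := hσ.exists_ge_orbit_eq_wordMap hx 0 v
  obtain ⟨n, hn, hpn⟩ := hp (r + v.length) (ε / 2) (half_pos hε)
  obtain ⟨w, hxn⟩ := exists_orbit_eq_wordMap_of_le hx hn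
  obtain ⟨r', hr'm, hyr'⟩ := hτ.exists_ge_orbit_eq_wordMap hy m (v ++ w)
  refine ⟨r' + (v ++ w).length, by omega, ?_⟩
  have hclose : dist (x n) (y (r' + (v ++ w).length)) < ε / 2 := by
    rw [hxn, hxr, hyr', wordMap_append]
    exact (dist_wordMap_le hf w _ _).trans_lt (hv _ (hxT r) _ (hyT r'))
  calc dist p (y (r' + (v ++ w).length))
      ≤ dist p (x n) + dist (x n) (y (r' + (v ++ w).length)) := dist_triangle _ _ _
    _ < ε / 2 + ε / 2 := add_lt_add hpn hclose
    _ = ε := add_halves ε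

end OmegaLimit

theorem stmt_7_general {X : Type*} [MetricSpace X] {N : ℕ}
    (f : Fin N → X → X)
    (hf : ∀ (i : Fin N) (a b : X), dist (f i a) (f i b) ≤ dist a b)
    (C : Set X) (hCne : C.Nonempty)
    (hCbdd : Bornology.IsBounded C) (hCsub : (⋃ i : Fin N, f i '' C) ⊆ C)
    (x y : ℕ → X) (σ τ : ℕ → Fin N)
    (hx : ∀ n : ℕ, x (n + 1) = f (σ n) (x n))
    (hy : ∀ n : ℕ, y (n + 1) = f (τ n) (y n))
    (hstart : y 0 = x 0)
    (hσ : Disjunctive σ) (hτ : Disjunctive τ)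
    (hcontr : ∃ (u : List (Fin N)) (L : ℝ), u ≠ [] ∧ 0 ≤ L ∧ L < 1 ∧
      ∀ s ∈ {p : X | ∃ w : List (Fin N), wordMap f w (x 0) = p},
      ∀ t ∈ {p : X | ∃ w : List (Fin N), wordMap f w (x 0) = p},
        dist (wordMap f u s) (wordMap f u t) ≤ L * dist s t) :
    omegaLimitSet x = omegaLimitSet y := by
  obtain ⟨u, L, -, hL0, hL1, hcon⟩ := hcontr
  have hCinv : ∀ i, MapsTo (f i) C C := fun i _ hc =>
    hCsub (mem_iUnion_of_mem i (mem_image_of_mem (f i) hc))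
  have hsync : IsSynchronizing f (range fun w => wordMap f w (x 0)) :=
    isSynchronizing_of_contracting_word (isBounded_range_wordMap hf hCinv hCne hCbdd (x 0))
      (fun _ => wordMap_mem_range_wordMap f u) hL0 hL1 hcon
  have hxT := orbit_mem_range_wordMap hx
  have hyT : ∀ n, y n ∈ range fun w => wordMap f w (x 0) := hstart ▸ orbit_mem_range_wordMap hy
  exact (omegaLimitSet_subset_of_isSynchronizing hf hsync hx hy hxT hyT hσ hτ).antisymm
    (omegaLimitSet_subset_of_isSynchronizing hf hsync hy hx hyT hxT hτ hσ)

/-- For a nonexpansive IFS on a complete metric space possessing a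
nonempty closed bounded subinvariant set, two orbits starting at the same point,
driven by disjunctive sequences, have the same omega-limit set, provided
condition (CO) holds: some finite composition of the maps is a Lipschitz
contraction on the branching tree rooted at the common starting point. -/
theorem stmt_7 {X : Type*} [MetricSpace X] [CompleteSpace X] {N : ℕ}
    (f : Fin N → X → X)
    (hf : ∀ (i : Fin N) (a b : X), dist (f i a) (f i b) ≤ dist a b)
    (C : Set X) (hCne : C.Nonempty) (hCclosed : IsClosed C)
    (hCbdd : Bornology.IsBounded C) (hCsub : (⋃ i : Fin N, f i '' C) ⊆ C)
    (x y : ℕ → X) (σ τ : ℕ → Fin N)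
    (hx : ∀ n : ℕ, x (n + 1) = f (σ n) (x n))
    (hy : ∀ n : ℕ, y (n + 1) = f (τ n) (y n))
    (hstart : y 0 = x 0)
    (hσ : Disjunctive σ) (hτ : Disjunctive τ)
    (hcontr : ∃ (u : List (Fin N)) (L : ℝ), u ≠ [] ∧ 0 ≤ L ∧ L < 1 ∧
      ∀ s ∈ {p : X | ∃ w : List (Fin N), wordMap f w (x 0) = p},
      ∀ t ∈ {p : X | ∃ w : List (Fin N), wordMap f w (x 0) = p},
        dist (wordMap f u s) (wordMap f u t) ≤ L * dist s t) :
    omegaLimitSet x = omegaLimitSet y :=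
  stmt_7_general f hf C hCne hCbdd hCsub x y σ τ hx hy hstart hσ hτ hcontr
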